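/- Leading Taylor coefficients of the generalized sine and cosine: if m ≥ 1 is an integer and s is a generalized sine function of order m, then lim_{x→0} (x − s(x))/x^{2m+1} = 1/(2(2m+1)) and lim_{x→0} (1 − s'(x))/x^{2m} = 1/2. -/

import Mathlib

/-- A generalized sine function of order `m ≥ 1`: a twice continuously differentiable
function `s : ℝ → ℝ` with `s'' = -m * s^(2m-1)`, `s 0 = 0` and `s' 0 = 1`. -/
def IsGenSine (m : ℕ) (s : ℝ → ℝ) : Prop :=
  ContDiff ℝ 2 s ∧ (∀ x : ℝ, deriv (deriv s) x = -(m : ℝ) * s x ^ (2 * m - 1)) ∧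
    s 0 = 0 ∧ deriv s 0 = 1

open Filter

/-- leading Taylor coefficients:
`(x - s x)/x^(2m+1) → 1/(2(2m+1))` and `(1 - s' x)/x^(2m) → 1/2` as `x → 0`. -/
theorem generalized_sine_taylor (m : ℕ) (hm : 1 ≤ m) (s : ℝ → ℝ)
    (hs : IsGenSine m s) :
    Tendsto (fun x : ℝ => (x - s x) / x ^ (2 * m + 1)) (nhdsWithin 0 {(0:ℝ)}ᶜ)
      (nhds (1 / (2 * (2 * (m:ℝ) + 1)))) ∧
    Tendsto (fun x : ℝ => (1 - deriv s x) / x ^ (2 * m)) (nhdsWithin 0 {(0:ℝ)}ᶜ)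
      (nhds (1/2)) := by
  obtain ⟨hC2, hode, h0, h1⟩ := hs
  have hds : Differentiable ℝ s := hC2.differentiable (by norm_num)
  have hc' : ContDiff ℝ 1 (deriv s) := by
    have : ContDiff ℝ (1 + 1) s := by norm_num; exact hC2
    exact (contDiff_succ_iff_deriv.mp this).2.2
  have hds' : Differentiable ℝ (deriv s) := hc'.differentiable (by norm_num)
  -- energy identity
  have key : ∀ x : ℝ, HasDerivAt (fun x => (deriv s x) ^ 2 + s x ^ (2 * m)) 0 x := by
    intro x
    have hA : HasDerivAt (deriv s) (deriv (deriv s) x) x := (hds' x).hasDerivAt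
    have hB : HasDerivAt s (deriv s x) x := (hds x).hasDerivAt
    have : HasDerivAt (fun x => (deriv s x) ^ 2 + s x ^ (2 * m)) _ x := (hA.pow 2).add (hB.pow (2 * m))
    convert this using 1
    rw [hode x]
    push_cast
    ring
  have hE : ∀ x : ℝ, (deriv s x) ^ 2 + s x ^ (2 * m) = 1 := by
    have hconst := is_const_of_deriv_eq_zero (f := fun x => (deriv s x) ^ 2 + s x ^ (2 * m))
      (fun x => (key x).differentiableAt) (fun x => (key x).deriv)
    intro x
    have h2 := hconst x 0
    simp only [h0, h1, one_pow, zero_pow (show 2 * m ≠ 0 by omega), add_zero] at h2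
    exact h2
  -- slope limit
  have hslope : Tendsto (fun x : ℝ => s x / x) (nhdsWithin 0 {(0:ℝ)}ᶜ) (nhds 1) := by
    have := hasDerivAt_iff_tendsto_slope.mp (hds 0).hasDerivAt
    rw [h1] at this
    refine this.congr (fun x => ?_)
    simp [slope_def_field, h0, div_eq_div_iff]
  have hdtend : Tendsto (deriv s) (nhds (0:ℝ)) (nhds 1) := by
    have := hc'.continuous.tendsto 0
    rwa [h1] at this
  have hdtend' : Tendsto (deriv s) (nhdsWithin 0 {(0:ℝ)}ᶜ) (nhds 1) :=
    hdtend.mono_left nhdsWithin_le_nhds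
  -- eventually 1 + deriv s x ≠ 0
  have hpos : ∀ᶠ x in nhdsWithin (0:ℝ) {(0:ℝ)}ᶜ, (1:ℝ) + deriv s x ≠ 0 := by
    filter_upwards [hdtend'.eventually (eventually_gt_nhds (by norm_num : (0:ℝ) < 1))]
      with x hx
    positivity
  -- second limit
  have hlim2 : Tendsto (fun x : ℝ => (1 - deriv s x) / x ^ (2 * m))
      (nhdsWithin 0 {(0:ℝ)}ᶜ) (nhds (1/2)) := by
    have hmain : Tendsto (fun x : ℝ => (s x / x) ^ (2 * m) / (1 + deriv s x))
        (nhdsWithin 0 {(0:ℝ)}ᶜ) (nhds (1/2)) := by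
      have h : Tendsto (fun x : ℝ => (s x / x) ^ (2 * m) / (1 + deriv s x))
          (nhdsWithin 0 {(0:ℝ)}ᶜ) (nhds ((1:ℝ) ^ (2 * m) / (1 + 1))) :=
        (hslope.pow (2 * m)).div ((tendsto_const_nhds.add hdtend')) (by norm_num)
      have hv : ((1:ℝ) ^ (2 * m) / (1 + 1)) = 1/2 := by norm_num
      rwa [hv] at h
    refine Tendsto.congr' ?_ hmain
    filter_upwards [hpos, self_mem_nhdsWithin] with x hne hx
    have hx0 : x ≠ 0 := hx
    have hfac : s x ^ (2 * m) = (1 - deriv s x) * (1 + deriv s x) := by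
      nlinarith [hE x]
    rw [div_pow, hfac, div_div]
    rw [mul_comm (x ^ (2 * m)) (1 + deriv s x), ← div_div, mul_div_assoc,
      div_self hne, mul_one]
  refine ⟨?_, hlim2⟩
  -- first limit via L'Hôpital
  have hdiv : Tendsto (fun x : ℝ => (1 - deriv s x) / ((2 * (m:ℝ) + 1) * x ^ (2 * m)))
      (nhdsWithin 0 {(0:ℝ)}ᶜ) (nhds (1 / (2 * (2 * (m:ℝ) + 1)))) := by
    have h := hlim2.mul (tendsto_const_nhds (x := (1 / (2 * (m:ℝ) + 1))))
    have hval : (1:ℝ)/2 * (1 / (2 * (m:ℝ) + 1)) = 1 / (2 * (2 * (m:ℝ) + 1)) := by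
      rw [div_mul_div_comm]; norm_num
    rw [hval] at h
    refine Tendsto.congr (fun x => ?_) h
    rw [div_mul_div_comm, mul_one, mul_comm (x ^ (2 * m))]
  have := HasDerivAt.lhopital_zero_nhdsNE
    (f := fun x : ℝ => x - s x) (f' := fun x => 1 - deriv s x)
    (g := fun x : ℝ => x ^ (2 * m + 1)) (g' := fun x => (2 * (m:ℝ) + 1) * x ^ (2 * m))
    (a := 0) (l := nhds (1 / (2 * (2 * (m:ℝ) + 1))))
    (Eventually.of_forall fun x => (hasDerivAt_id x).sub (hds x).hasDerivAt)
    (Eventually.of_forall fun x => by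
      have := hasDerivAt_pow (2 * m + 1) x
      simpa [Nat.add_sub_cancel] using this.congr_deriv (by push_cast; ring))
    (by
      filter_upwards [self_mem_nhdsWithin] with x hx
      have hx0 : (x:ℝ) ≠ 0 := hx
      positivity)
    (by
      have hcont : Tendsto (fun x : ℝ => x - s x) (nhds 0) (nhds (0 - s 0)) :=
        (continuous_id.sub hds.continuous).tendsto 0
      rw [h0, sub_zero] at hcont
      exact hcont.mono_left nhdsWithin_le_nhds)
    (by
      have : Tendsto (fun x : ℝ => x ^ (2 * m + 1)) (nhds 0) (nhds ((0:ℝ) ^ (2 * m + 1))) :=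
        (continuous_pow _).tendsto 0
      rw [zero_pow (by omega)] at this
      exact this.mono_left nhdsWithin_le_nhds)
    hdiv
  exact this
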